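/- arXiv:1911.04217 — 7 statements merged into one kernel-verified Lean document; each statement's English description precedes it below -/
import Mathlib

section
/- For f, g ∈ Λ, the basic open set D(f) is contained in D(g) in Spec(Λ) if and only if Supp(f) ⊆ Supp(g). -/
/-- The support of an element of a product of fields. -/
def Supp {X : Type*} {K : X → Type*} [∀ x, Field (K x)] (f : Π x, K x) : Set X :=
  {x | f x ≠ 0}

theorem basicOpen_le_iff {X : Type*} {K : X → Type*} [∀ x, Field (K x)]
    (f g : Π x, K x) :
    PrimeSpectrum.basicOpen f ≤ PrimeSpectrum.basicOpen g ↔ Supp f ⊆ Supp g := by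
  rw [PrimeSpectrum.basicOpen_le_basicOpen_iff]
  constructor
  · rintro ⟨n, hn⟩ x hx
    rw [Ideal.mem_span_singleton] at hn
    obtain ⟨c, hc⟩ := hn
    intro hg
    apply pow_ne_zero n hx
    have := congrFun hc x
    simp only [Pi.mul_apply, hg, zero_mul] at this
    simpa using this
  · intro h
    apply Ideal.le_radical
    rw [Ideal.mem_span_singleton]
    refine ⟨fun x => f x / g x, funext fun x => ?_⟩
    by_cases hg : g x = 0
    · have : f x = 0 := by
        by_contra hf
        exact h hf hg
      simp [this, hg]
    · simp [Pi.mul_apply, hg, mul_div_cancel₀]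
end

section
/- For f, g ∈ Λ, letting R = ∏_{x∈Supp(f)} K_x and R' = ∏_{x∈Supp(g)} K_x (viewed as Λ-algebras via the canonical projections), the tensor product R ⊗_Λ R' is isomorphic as a Λ-algebra to ∏_{x∈Supp(fg)} K_x. -/
/-- The canonical projection from the full product to the product over a subset. -/
def resHom {X : Type*} {K : X → Type*} [∀ x, Field (K x)] (s : Set X) :
    (Π x, K x) →+* (Π x : s, K x) :=
  Pi.ringHom fun x => Pi.evalRingHom K x.1

noncomputable instance resAlgebra {X : Type*} {K : X → Type*} [∀ x, Field (K x)]
    (s : Set X) : Algebra (Π x, K x) (Π x : s, K x) :=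
  (resHom s).toAlgebra

open TensorProduct

section QuotTensor

variable {R : Type*} [CommRing R] (I J : Ideal R)

/-- `(R⧸I) ⊗[R] (R⧸J) ≃ₐ[R] R ⧸ (I ⊔ J)`. -/
noncomputable def quotTensorQuot : ((R ⧸ I) ⊗[R] (R ⧸ J)) ≃ₐ[R] R ⧸ (I ⊔ J) := by
  refine AlgEquiv.ofAlgHom
    (Algebra.TensorProduct.lift
      (Ideal.Quotient.liftₐ I (Ideal.Quotient.mkₐ R (I ⊔ J)) ?_)
      (Ideal.Quotient.liftₐ J (Ideal.Quotient.mkₐ R (I ⊔ J)) ?_)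
      (fun _ _ => mul_comm _ _))
    (Ideal.Quotient.liftₐ (I ⊔ J) (Algebra.ofId R _) ?_) ?_ ?_
  · intro a ha
    simpa using Ideal.Quotient.eq_zero_iff_mem.mpr (Ideal.mem_sup_left ha)
  · intro a ha
    simpa using Ideal.Quotient.eq_zero_iff_mem.mpr (Ideal.mem_sup_right ha)
  · intro a ha
    obtain ⟨i, hi, j, hj, rfl⟩ := Submodule.mem_sup.mp ha
    have h1 : (Algebra.ofId R ((R ⧸ I) ⊗[R] (R ⧸ J))) i = 0 := by
      show algebraMap R _ i = 0
      have hz : algebraMap R (R ⧸ I) i = 0 := Ideal.Quotient.eq_zero_iff_mem.mpr hi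
      rw [Algebra.TensorProduct.algebraMap_apply, hz, TensorProduct.zero_tmul]
    have h2 : (Algebra.ofId R ((R ⧸ I) ⊗[R] (R ⧸ J))) j = 0 := by
      show algebraMap R _ j = 0
      have hz : algebraMap R (R ⧸ J) j = 0 := Ideal.Quotient.eq_zero_iff_mem.mpr hj
      rw [Algebra.algebraMap_eq_smul_one]
      show j • ((1 : R ⧸ I) ⊗ₜ[R] (1 : R ⧸ J)) = 0
      rw [TensorProduct.smul_tmul', TensorProduct.smul_tmul, ← Algebra.algebraMap_eq_smul_one, hz,
        TensorProduct.tmul_zero]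
    rw [map_add, h1, h2, add_zero]
  · apply Ideal.Quotient.algHom_ext
    ext
  · apply Algebra.TensorProduct.ext
    · apply Ideal.Quotient.algHom_ext
      ext
    · apply Ideal.Quotient.algHom_ext
      ext

end QuotTensor

open TensorProduct in
open TensorProduct in
theorem tensor_prod_iso {X : Type*} {K : X → Type*} [∀ x, Field (K x)]
    (f g : Π x, K x) :
    Nonempty (((Π x : (Supp f : Set X), K x) ⊗[Π x, K x] (Π x : (Supp g : Set X), K x))
      ≃ₐ[Π x, K x] (Π x : (Supp (f * g) : Set X), K x)) := by
  classical
  have hres : ∀ (s : Set X) (a : (Π x, K x)) (x : s), Algebra.ofId (Π x, K x) (Π x : s, K x) a x = a x := by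
    intro s a x; rfl
  have hsurj : ∀ s : Set X, Function.Surjective (Algebra.ofId (Π x, K x) (Π x : s, K x)) := by
    intro s y
    refine ⟨fun x => if h : x ∈ s then y ⟨x, h⟩ else 0, ?_⟩
    funext x
    rw [hres]
    exact dif_pos x.2
  have hker : ∀ (s : Set X) (a : (Π x, K x)),
      a ∈ RingHom.ker ((Algebra.ofId (Π x, K x) (Π x : s, K x))) ↔ ∀ x ∈ s, a x = 0 := by
    intro s a
    rw [RingHom.mem_ker]
    constructor
    · intro h x hx
      have := congrFun h ⟨x, hx⟩
      rwa [hres] at this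
    · intro h
      funext x
      rw [hres]
      exact h x x.2
  have hsup : RingHom.ker ((Algebra.ofId (Π x, K x) (Π x : (Supp f : Set X), K x)))
      ⊔ RingHom.ker ((Algebra.ofId (Π x, K x) (Π x : (Supp g : Set X), K x)))
      = RingHom.ker ((Algebra.ofId (Π x, K x) (Π x : ((Supp f ∩ Supp g : Set X)), K x))) := by
    apply le_antisymm
    · apply sup_le
      · intro a ha
        rw [hker] at ha ⊢
        exact fun x hx => ha x hx.1
      · intro a ha
        rw [hker] at ha ⊢
        exact fun x hx => ha x hx.2
    · intro a ha
      rw [hker] at ha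
      have : a = (fun x => if x ∈ Supp g then a x else 0)
          + (fun x => if x ∈ Supp g then 0 else a x) := by
        funext x
        by_cases h : x ∈ Supp g <;> simp [h]
      rw [this]
      apply Submodule.add_mem_sup
      · rw [hker]
        intro x hx
        by_cases h : x ∈ Supp g
        · simpa [h] using ha x ⟨hx, h⟩
        · simp [h]
      · rw [hker]
        intro x hx
        simp [hx]
  have hfg : (Supp (f * g) : Set X) = Supp f ∩ Supp g := by
    ext x
    simp [Supp, Set.mem_setOf_eq, mul_ne_zero_iff]
  rw [hfg]
  exact ⟨(Algebra.TensorProduct.congr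
      (Ideal.quotientKerAlgEquivOfSurjective (hsurj (Supp f))).symm
      (Ideal.quotientKerAlgEquivOfSurjective (hsurj (Supp g))).symm).trans
    ((quotTensorQuot _ _).trans ((Ideal.quotientEquivAlgOfEq (Π x, K x) hsup).trans
      (Ideal.quotientKerAlgEquivOfSurjective (hsurj (Supp f ∩ Supp g)))))⟩
end

section
/- Every prime ideal of Λ is a maximal ideal. -/
theorem prime_is_maximal {X : Type*} {K : X → Type*} [∀ x, Field (K x)]
    (P : Ideal (Π x, K x)) (hP : P.IsPrime) : P.IsMaximal := by
  apply Ideal.Quotient.maximal_of_isField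
  constructor
  · exact ⟨0, 1, zero_ne_one⟩
  · exact mul_comm
  · intro a ha
    obtain ⟨a, rfl⟩ := Ideal.Quotient.mk_surjective a
    refine ⟨Ideal.Quotient.mk P (fun x => (a x)⁻¹), ?_⟩
    have key : a * (a * (fun x => (a x)⁻¹) - 1) = 0 := by
      funext x
      by_cases hx : a x = 0 <;>
        simp [hx, Pi.mul_apply, Pi.sub_apply, mul_inv_cancel₀]
    have hmem : a * (a * (fun x => (a x)⁻¹) - 1) ∈ P := by
      rw [key]; exact P.zero_mem
    have haP : a ∉ P := by
      intro h
      exact ha (Ideal.Quotient.eq_zero_iff_mem.mpr h)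
    have := (hP.mem_or_mem hmem).resolve_left haP
    have h2 : Ideal.Quotient.mk P (a * fun x => (a x)⁻¹) = Ideal.Quotient.mk P 1 :=
      Ideal.Quotient.eq.mpr this
    rw [map_mul, map_one] at h2
    exact h2
end

section
/- If the zero ideal of Λ is a finite intersection of maximal ideals, then X is a finite set. -/
theorem finite_of_zero_eq_finite_inter_maximals {X : Type*} {K : X → Type*}
    [∀ x, Field (K x)]
    (s : Finset (Ideal (Π x, K x))) (hmax : ∀ M ∈ s, M.IsMaximal)
    (hinf : s.inf id = ⊥) : Finite X := by
  classical
  -- e x : indicator idempotent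
  set e : X → (Π x, K x) := fun x => Pi.single x 1 with he
  have hne : ∀ x, e x ≠ 0 := by
    intro x h
    have := congrFun h x
    simp [he] at this
  have hexists : ∀ x : X, ∃ M ∈ s, e x ∉ M := by
    intro x
    by_contra h
    push_neg at h
    have : e x ∈ s.inf id := by
      rw [Submodule.mem_finsetInf]
      intro M hM
      exact h M hM
    rw [hinf] at this
    exact hne x this
  choose f hf hf' using hexists
  have hinj : Function.Injective (fun x => (⟨f x, hf x⟩ : {M // M ∈ s})) := by
    intro x y hxy
    by_contra hne'
    have hfx : f x = f y := congrArg Subtype.val hxy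
    have hmul : e x * e y = 0 := by
      funext z
      by_cases hz : z = x
      · subst hz
        simp [he, Pi.single_eq_of_ne hne']
      · simp [he, Pi.single_eq_of_ne hz]
    have hmem : e x * e y ∈ f x := by simp [hmul]
    have hprime : (f x).IsPrime := (hmax _ (hf x)).isPrime
    rcases hprime.mem_or_mem hmem with h1 | h1
    · exact hf' x h1
    · rw [hfx] at h1; exact hf' y h1
  exact Finite.of_injective _ hinj
end

section
/- X is a finite set if and only if every maximal ideal of Λ is of the form 𝔪_x = {f ∈ Λ : f_x = 0} for some x ∈ X. -/
theorem finite_iff_maximals_eq_ker_eval {X : Type*} {K : X → Type*}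
    [∀ x, Field (K x)] :
    Finite X ↔
      ∀ M : Ideal (Π x, K x), M.IsMaximal →
        ∃ x : X, M = RingHom.ker (Pi.evalRingHom K x) := by
  classical
  constructor
  · intro hX M hM
    have : Fintype X := Fintype.ofFinite X
    have h1 : (1 : Π x, K x) = ∑ x, Pi.single x 1 := by
      funext y
      simp [Finset.sum_apply, Pi.single_apply, Finset.sum_ite_eq]
    have hex : ∃ x, Pi.single x (1 : K x) ∉ M := by
      by_contra h
      push_neg at h
      have h1M : (1 : Π x, K x) ∈ M := h1 ▸ Ideal.sum_mem M fun x _ => h x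
      exact hM.ne_top ((Ideal.eq_top_iff_one M).mpr h1M)
    obtain ⟨x, hx⟩ := hex
    refine ⟨x, ?_⟩
    have hker : (RingHom.ker (Pi.evalRingHom K x)).IsMaximal :=
      RingHom.ker_isMaximal_of_surjective _ (fun a => ⟨Pi.single x a, by simp⟩)
    have hle : RingHom.ker (Pi.evalRingHom K x) ≤ M := by
      intro f hf
      have hfx : f x = 0 := hf
      have hsing : ∀ y, y ≠ x → Pi.single y (1 : K y) ∈ M := by
        intro y hy
        have hzero : Pi.single y (1 : K y) * Pi.single x 1 = 0 := by
          funext z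
          by_cases hzy : z = y
          · subst hzy
            simp [Pi.single_eq_of_ne hy]
          · simp [Pi.single_eq_of_ne hzy]
        have := hM.isPrime.mem_or_mem (hzero ▸ M.zero_mem)
        tauto
      have hfe : f = ∑ y ∈ Finset.univ.erase x, f * Pi.single y 1 := by
        funext z
        rw [Finset.sum_apply]
        by_cases hz : z = x
        · subst hz
          simp [hfx, Pi.single_apply]
        · rw [Finset.sum_eq_single z]
          · simp [Pi.single_apply]
          · intro b _ hbz
            simp [Pi.single_apply, hbz]
          · intro h
            exact absurd (Finset.mem_erase.mpr ⟨hz, Finset.mem_univ z⟩) h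
      rw [hfe]
      exact Ideal.sum_mem M fun y hy =>
        M.mul_mem_left f (hsing y (Finset.mem_erase.mp hy).1)
    exact (hker.eq_of_le hM.ne_top hle).symm
  · intro h
    by_contra hX
    rw [not_finite_iff_infinite] at hX
    let I : Ideal (Π x, K x) :=
      { carrier := {f : Π x, K x | {x | f x ≠ 0}.Finite}
        add_mem' := by
          intro f g hf hg
          refine (Set.Finite.union hf hg).subset ?_
          intro x hx
          by_contra hc
          simp only [Set.mem_union, Set.mem_setOf_eq, not_or, not_not] at hc
          exact hx (by simp [Pi.add_apply, hc.1, hc.2])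
        zero_mem' := by simp
        smul_mem' := by
          intro c f hf
          refine hf.subset ?_
          intro x hx
          by_contra hc
          simp only [Set.mem_setOf_eq, not_not] at hc
          exact hx (by simp [Pi.smul_apply, smul_eq_mul, hc]) }
    have hne : I ≠ ⊤ := by
      intro htop
      have h1 : (1 : Π x, K x) ∈ I := htop ▸ Submodule.mem_top
      have hfin : {x | (1 : Π x, K x) x ≠ 0}.Finite := h1
      have hsupp : {x | (1 : Π x, K x) x ≠ 0} = Set.univ := by
        ext y; simp
      rw [hsupp] at hfin
      exact Set.infinite_univ hfin
    obtain ⟨M, hM, hIM⟩ := Ideal.exists_le_maximal I hne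
    obtain ⟨x, rfl⟩ := h M hM
    have hmem : Pi.single x (1 : K x) ∈ I := by
      have hsub : {y | Pi.single x (1 : K x) y ≠ 0} ⊆ {x} := by
        intro y hy
        by_contra hyx
        simp only [Set.mem_singleton_iff] at hyx
        exact hy (Pi.single_eq_of_ne hyx 1)
      exact (Set.finite_singleton x).subset hsub
    have h10 := hIM hmem
    rw [RingHom.mem_ker] at h10
    simp at h10
end

section
/- Let T be the set of all f ∈ Λ whose support is cofinite (X \ Supp(f) is finite). Then T is a multiplicative set and the localization T⁻¹Λ is isomorphic to Λ/𝔉(Λ), where 𝔉(Λ) is the ideal of elements with finite support. -/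
theorem Ideal.Quotient.isLocalization_of_isUnit_of_exists_mul_eq_zero {R : Type*} [CommRing R]
    (M : Submonoid R) (I : Ideal R)
    (isUnit_mk : ∀ m ∈ M, IsUnit (Ideal.Quotient.mk I m))
    (exists_mul_eq_zero : ∀ a ∈ I, ∃ m ∈ M, m * a = 0) :
    IsLocalization M (R ⧸ I) where
  map_units m := isUnit_mk m m.2
  surj z := by
    obtain ⟨a, rfl⟩ := Ideal.Quotient.mk_surjective z
    exact ⟨⟨a, 1⟩, by simp⟩
  exists_of_eq {a b} h := by
    rw [Ideal.Quotient.algebraMap_eq, Ideal.Quotient.mk_eq_mk_iff_sub_mem] at h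
    obtain ⟨m, hm, hmab⟩ := exists_mul_eq_zero _ h
    exact ⟨⟨m, hm⟩, by rwa [mul_sub, sub_eq_zero] at hmab⟩

section ProductOfFields

variable {X : Type*} {K : X → Type*} [∀ x, Field (K x)]

@[simp]
theorem supp_zero : Supp (0 : Π x, K x) = ∅ := by
  ext; simp [Supp]

@[simp]
theorem supp_one : Supp (1 : Π x, K x) = Set.univ := by
  ext; simp [Supp]

theorem supp_mul (f g : Π x, K x) : Supp (f * g) = Supp f ∩ Supp g := by
  ext; simp [Supp]

theorem supp_add_subset (f g : Π x, K x) : Supp (f + g) ⊆ Supp f ∪ Supp g := by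
  intro x hx
  by_contra h
  simp_all [Supp]

theorem supp_one_sub_mul_inv (f : Π x, K x) : Supp (1 - f * f⁻¹) = (Supp f)ᶜ := by
  ext x
  by_cases hx : f x = 0 <;> simp [Supp, hx]

theorem one_sub_mul_inv_mul (f : Π x, K x) : (1 - f * f⁻¹) * f = 0 := by
  ext x; simp [sub_mul, mul_inv_mul_cancel]

def cofiniteSupport : Submonoid (Π x, K x) where
  carrier := {f | (Supp f)ᶜ.Finite}
  mul_mem' {f g} hf hg := by
    simpa only [Set.mem_ofPred_eq, supp_mul, Set.compl_inter] using hf.union hg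
  one_mem' := by simp

def finiteSupport : Ideal (Π x, K x) where
  carrier := {f | (Supp f).Finite}
  add_mem' {f g} hf hg := (hf.union hg).subset (supp_add_subset f g)
  zero_mem' := by simp
  smul_mem' c f hf := hf.subset ((supp_mul c f).trans_subset Set.inter_subset_right)

theorem mem_cofiniteSupport {f : Π x, K x} : f ∈ cofiniteSupport ↔ (Supp f)ᶜ.Finite := Iff.rfl

theorem mem_finiteSupport {f : Π x, K x} : f ∈ finiteSupport ↔ (Supp f).Finite := Iff.rfl

theorem isUnit_mk_finiteSupport {t : Π x, K x} (ht : t ∈ cofiniteSupport) :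
    IsUnit (Ideal.Quotient.mk finiteSupport t) := by
  have : Ideal.Quotient.mk finiteSupport t * Ideal.Quotient.mk finiteSupport t⁻¹ = 1 := by
    rwa [← map_mul, ← map_one (Ideal.Quotient.mk _), eq_comm,
      Ideal.Quotient.mk_eq_mk_iff_sub_mem, mem_finiteSupport, supp_one_sub_mul_inv]
  exact .of_mul_eq_one _ this

theorem exists_mem_cofiniteSupport_mul_eq_zero {a : Π x, K x} (ha : a ∈ finiteSupport) :
    ∃ t ∈ cofiniteSupport, t * a = 0 :=
  ⟨1 - a * a⁻¹, by rwa [mem_cofiniteSupport, supp_one_sub_mul_inv, compl_compl],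
    one_sub_mul_inv_mul a⟩

end ProductOfFields

/-- The localization of Λ at the multiplicative set of cofinitely supported
elements is the quotient of Λ by the ideal of finitely supported elements. -/
theorem localization_cofinite_iso {X : Type*} {K : X → Type*} [∀ x, Field (K x)] :
    ∃ (T : Submonoid (Π x, K x)) (F : Ideal (Π x, K x)),
      (T : Set (Π x, K x)) = {f | ((Supp f)ᶜ : Set X).Finite} ∧
      (F : Set (Π x, K x)) = {f | (Supp f).Finite} ∧
      Nonempty (Localization T ≃+* ((Π x, K x) ⧸ F)) := by
  refine ⟨cofiniteSupport, finiteSupport, rfl, rfl, ?_⟩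
  have : IsLocalization (cofiniteSupport (K := K)) ((Π x, K x) ⧸ finiteSupport) :=
    Ideal.Quotient.isLocalization_of_isUnit_of_exists_mul_eq_zero _ _
      (fun _ => isUnit_mk_finiteSupport) fun _ => exists_mem_cofiniteSupport_mul_eq_zero
  exact ⟨(IsLocalization.algEquiv (cofiniteSupport (K := K)) (Localization _) _).toRingEquiv⟩
end

section
/- If K is a finite field with q elements, then for every maximal ideal M of the ring R = Fun(X, K) of all functions from X to K, the residue field R/M is isomorphic to K. -/
set_option synthInstance.maxHeartbeats 400000

theorem residue_field_of_fun_ring {X : Type*} {K : Type*} [Field K] [Fintype K]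
    (M : Ideal (X → K)) (hM : M.IsMaximal) :
    Nonempty (((X → K) ⧸ M) ≃+* K) := by
  letI : Field ((X → K) ⧸ M) := Ideal.Quotient.field M
  let f : K →+* ((X → K) ⧸ M) := (Ideal.Quotient.mk M).comp (Pi.constRingHom X K)
  have hsurj : Function.Surjective f := by
    intro y
    obtain ⟨a, rfl⟩ := Ideal.Quotient.mk_surjective y
    have hz : (∏ c : K, (a - Function.const X c)) = 0 := by
      funext x
      simp only [Finset.prod_apply, Pi.sub_apply, Function.const_apply, Pi.zero_apply]
      exact Finset.prod_eq_zero (Finset.mem_univ (a x)) (by simp)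
    have hz' : (∏ c : K, (Ideal.Quotient.mk M (a - Function.const X c))) = 0 := by
      rw [← map_prod, hz, map_zero]
    obtain ⟨c, -, hc⟩ := Finset.prod_eq_zero_iff.mp hz'
    refine ⟨c, ?_⟩
    rw [RingHom.map_sub, sub_eq_zero] at hc
    exact hc.symm
  have hinj : Function.Injective f := f.injective
  exact ⟨(RingEquiv.ofBijective f ⟨hinj, hsurj⟩).symm⟩
end
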